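/- Define, for Λ > 0, E(Λ) = 4Λ² \int_0^{∞} [ (arctan u - u/(1+u²)) / (u + (8π/3) Λ (u - arctan u)) ] · (1/u²) \, du. Then \sqrt{2π}/\sqrt{3} ≤ liminf_{Λ → ∞} E(Λ)/Λ^{3/2} and limsup_{Λ → ∞} E(Λ)/Λ^{3/2} ≤ \sqrt{2π}. -/

import Mathlib

open Real Filter MeasureTheory

/-- Ground state energy of the 3-dimensional Pauli–Fierz Hamiltonian with sharp
ultraviolet cutoff `Λ`, coupling `κ = 1` and no external potential. -/
noncomputable def groundEnergy (Λ : ℝ) : ℝ :=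
  4 * Λ ^ 2 * ∫ u in Set.Ioi (0 : ℝ),
    (Real.arctan u - u / (1 + u ^ 2)) /
      (u + 8 * π / 3 * Λ * (u - Real.arctan u)) / u ^ 2

/-!
Write the integrand as `f u / (u + (8π/3) Λ g u) / u²` with `f u = arctan u - u / (1 + u²)` and
`g u = u - arctan u`. Monotonicity arguments give `f u ≈ 2u³/3` and `g u ≈ u³/3` up to powers of
`1 + u²`, so on `(0, δ]` the integrand lies between `(1 + δ²)⁻²` and `(1 + δ²)` times
`(2/3) (1 + (8π/9) Λ u²)⁻¹`, whose integral is an explicit `arctan`; on `(δ, ∞)` it is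
`O(Λ⁻¹ u⁻²)`. After multiplication by `4 Λ² / Λ^(3/2) = 4 √Λ` the first piece tends to
`√(2π)` up to those factors and the second to `0`. Letting `δ → 0` gives
`E(Λ) / Λ^(3/2) → √(2π)`, which is stronger than both bounds.
-/

open Set Topology

theorem tendsto_of_squeeze_family {ι α β : Type*} [TopologicalSpace β] [LinearOrder β]
    [OrderTopology β] {p : Filter ι} [p.NeBot] {l : Filter α} {f : α → β} {lo hi : ι → α → β}
    {ℓ υ : ι → β} {b : β} (hℓ : Tendsto ℓ p (𝓝 b)) (hυ : Tendsto υ p (𝓝 b))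
    (hlo : ∀ᶠ i in p, Tendsto (lo i) l (𝓝 (ℓ i))) (hhi : ∀ᶠ i in p, Tendsto (hi i) l (𝓝 (υ i)))
    (hle : ∀ᶠ i in p, ∀ᶠ a in l, lo i a ≤ f a ∧ f a ≤ hi i a) : Tendsto f l (𝓝 b) := by
  refine tendsto_order.2 ⟨fun c hc => ?_, fun c hc => ?_⟩
  · obtain ⟨i, hci, hi, hle⟩ := ((hℓ.eventually (lt_mem_nhds hc)).and (hlo.and hle)).exists
    filter_upwards [hi.eventually (lt_mem_nhds hci), hle] with a h₁ h₂ using h₁.trans_le h₂.1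
  · obtain ⟨i, hci, hi, hle⟩ := ((hυ.eventually (gt_mem_nhds hc)).and (hhi.and hle)).exists
    filter_upwards [hi.eventually (gt_mem_nhds hci), hle] with a h₁ h₂ using h₂.2.trans_lt h₁

theorem integral_Ioc_inv_one_add_mul_sq {B δ : ℝ} (hB : 0 < B) (hδ : 0 ≤ δ) :
    ∫ u in Ioc 0 δ, (1 + B * u ^ 2)⁻¹ = arctan (√B * δ) / √B := by
  have hB' : B = √B ^ 2 := (sq_sqrt hB.le).symm
  rw [← intervalIntegral.integral_of_le hδ, hB']
  simp_rw [← mul_pow]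
  rw [intervalIntegral.integral_comp_mul_left (fun x => (1 + x ^ 2)⁻¹) (sqrt_pos.2 hB).ne']
  simp [div_eq_inv_mul, sqrt_sq (sqrt_nonneg B)]

theorem integral_Ioi_inv_sq {δ : ℝ} (hδ : 0 < δ) : ∫ u in Ioi δ, (u ^ 2)⁻¹ = δ⁻¹ := by
  have h := integral_Ioi_rpow_of_lt (a := -2) (by norm_num) hδ
  norm_num at h
  rw [h, rpow_neg_one]

theorem integrableOn_Ioi_inv_sq {δ : ℝ} (hδ : 0 < δ) :
    IntegrableOn (fun u : ℝ => (u ^ 2)⁻¹) (Ioi δ) := by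
  have h := integrableOn_Ioi_rpow_of_lt (a := -2) (by norm_num) hδ
  norm_num at h
  exact h

theorem tendsto_sqrt_mul_arctan_div_sqrt {c δ : ℝ} (hc : 0 < c) (hδ : 0 < δ) :
    Tendsto (fun Λ => √Λ * (arctan (√(c * Λ) * δ) / √(c * Λ))) atTop (𝓝 (π / 2 / √c)) := by
  have harg : Tendsto (fun Λ => √(c * Λ) * δ) atTop atTop :=
    (tendsto_sqrt_atTop.comp (tendsto_id.const_mul_atTop hc)).atTop_mul_const hδ
  have harctan := (tendsto_arctan_atTop.mono_right nhdsWithin_le_nhds).comp harg |>.div_const √c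
  refine harctan.congr' ?_
  filter_upwards [eventually_gt_atTop 0] with Λ hΛ
  simp only [Function.comp_apply]
  generalize arctan (√(c * Λ) * δ) = t
  rw [sqrt_mul hc.le]
  field_simp

theorem continuous_inv_one_add_mul_sq {B : ℝ} (hB : 0 ≤ B) :
    Continuous fun u : ℝ => (1 + B * u ^ 2)⁻¹ :=
  (by fun_prop : Continuous fun u : ℝ => 1 + B * u ^ 2).inv₀ fun u => by positivity

namespace Real

lemma le_arctan_sub_div_one_add_sq {u : ℝ} (hu : 0 ≤ u) :
    2 * u ^ 3 / (3 * (1 + u ^ 2) ^ 2) ≤ arctan u - u / (1 + u ^ 2) := by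
  have hd (x : ℝ) : HasDerivAt
      (fun x => arctan x - x / (1 + x ^ 2) - 2 * x ^ 3 / (3 * (1 + x ^ 2) ^ 2))
      (8 * x ^ 4 / (3 * (1 + x ^ 2) ^ 3)) x := by
    have h := ((hasDerivAt_arctan x).sub
      ((hasDerivAt_id' x).div ((hasDerivAt_pow 2 x).const_add 1) (by positivity))).sub
      (((hasDerivAt_pow 3 x).const_mul 2).div
        ((((hasDerivAt_pow 2 x).const_add 1).fun_pow 2).const_mul 3) (by positivity))
    refine h.congr_deriv ?_
    field_simp
    ring
  have := monotone_of_hasDerivAt_nonneg hd (fun x => by positivity) hu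
  norm_num at this
  linarith

lemma arctan_sub_div_one_add_sq_le {u : ℝ} (hu : 0 ≤ u) :
    arctan u - u / (1 + u ^ 2) ≤ 2 * u ^ 3 / 3 := by
  have hd (x : ℝ) : HasDerivAt (fun x => 2 * x ^ 3 / 3 - (arctan x - x / (1 + x ^ 2)))
      (2 * x ^ 4 * (2 + x ^ 2) / (1 + x ^ 2) ^ 2) x := by
    have h := (((hasDerivAt_pow 3 x).const_mul 2).div_const 3).sub ((hasDerivAt_arctan x).sub
      ((hasDerivAt_id' x).div ((hasDerivAt_pow 2 x).const_add 1) (by positivity)))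
    refine h.congr_deriv ?_
    field_simp
    ring
  have := monotone_of_hasDerivAt_nonneg hd (fun x => by positivity) hu
  norm_num at this
  linarith

lemma le_sub_arctan {u : ℝ} (hu : 0 ≤ u) : u ^ 3 / (3 * (1 + u ^ 2)) ≤ u - arctan u := by
  have hd (x : ℝ) : HasDerivAt (fun x => x - arctan x - x ^ 3 / (3 * (1 + x ^ 2)))
      (2 * x ^ 4 / (3 * (1 + x ^ 2) ^ 2)) x := by
    have h := ((hasDerivAt_id' x).sub (hasDerivAt_arctan x)).sub
      ((hasDerivAt_pow 3 x).div (((hasDerivAt_pow 2 x).const_add 1).const_mul 3) (by positivity))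
    refine h.congr_deriv ?_
    field_simp
    ring
  have := monotone_of_hasDerivAt_nonneg hd (fun x => by positivity) hu
  norm_num at this
  linarith

lemma sub_arctan_le {u : ℝ} (hu : 0 ≤ u) : u - arctan u ≤ u ^ 3 / 3 := by
  have hd (x : ℝ) : HasDerivAt (fun x => x ^ 3 / 3 - (x - arctan x)) (x ^ 4 / (1 + x ^ 2)) x := by
    have h := ((hasDerivAt_pow 3 x).div_const 3).sub ((hasDerivAt_id' x).sub (hasDerivAt_arctan x))
    refine h.congr_deriv ?_
    field_simp
    ring
  have := monotone_of_hasDerivAt_nonneg hd (fun x => by positivity) hu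
  norm_num at this
  linarith

lemma monotone_id_sub_arctan : Monotone fun u : ℝ => u - arctan u := by
  refine monotone_of_hasDerivAt_nonneg (f' := fun x => x ^ 2 / (1 + x ^ 2)) (fun x => ?_)
    (fun x => by positivity)
  refine ((hasDerivAt_id' x).sub (hasDerivAt_arctan x)).congr_deriv ?_
  field_simp
  ring

lemma arctan_sub_div_one_add_sq_pos {u : ℝ} (hu : 0 < u) : 0 < arctan u - u / (1 + u ^ 2) :=
  (by positivity : (0 : ℝ) < 2 * u ^ 3 / (3 * (1 + u ^ 2) ^ 2)).trans_le
    (le_arctan_sub_div_one_add_sq hu.le)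

lemma sub_arctan_pos {u : ℝ} (hu : 0 < u) : 0 < u - arctan u :=
  (by positivity : (0 : ℝ) < u ^ 3 / (3 * (1 + u ^ 2))).trans_le (le_sub_arctan hu.le)

lemma add_mul_sub_arctan_pos {a u : ℝ} (ha : 0 ≤ a) (hu : 0 < u) : 0 < u + a * (u - arctan u) :=
  add_pos_of_pos_of_nonneg hu (mul_nonneg ha (sub_arctan_pos hu).le)

end Real

noncomputable def groundEnergyIntegrand (Λ u : ℝ) : ℝ :=
  (arctan u - u / (1 + u ^ 2)) / (u + 8 * π / 3 * Λ * (u - arctan u)) / u ^ 2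

section Integrand

variable {Λ u δ : ℝ}

lemma measurable_groundEnergyIntegrand (Λ : ℝ) : Measurable (groundEnergyIntegrand Λ) := by
  unfold groundEnergyIntegrand
  fun_prop

lemma groundEnergyIntegrand_nonneg (hΛ : 0 ≤ Λ) (hu : 0 < u) : 0 ≤ groundEnergyIntegrand Λ u := by
  have := arctan_sub_div_one_add_sq_pos hu
  have := sub_arctan_pos hu
  unfold groundEnergyIntegrand
  positivity

lemma le_groundEnergyIntegrand_of_le (hΛ : 0 ≤ Λ) (hu : 0 < u) (huδ : u ≤ δ) :
    2 / 3 / (1 + δ ^ 2) ^ 2 * (1 + 8 * π / 9 * Λ * u ^ 2)⁻¹ ≤ groundEnergyIntegrand Λ u := by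
  have hden : u + 8 * π / 3 * Λ * (u - arctan u) ≤ u * (1 + 8 * π / 9 * Λ * u ^ 2) := by
    nlinarith [mul_le_mul_of_nonneg_left (sub_arctan_le hu.le) (by positivity : 0 ≤ 8 * π / 3 * Λ)]
  have hf : 2 * u ^ 3 / (3 * (1 + δ ^ 2) ^ 2) ≤ arctan u - u / (1 + u ^ 2) :=
    le_trans (by gcongr) (le_arctan_sub_div_one_add_sq hu.le)
  calc 2 / 3 / (1 + δ ^ 2) ^ 2 * (1 + 8 * π / 9 * Λ * u ^ 2)⁻¹
      = 2 * u ^ 3 / (3 * (1 + δ ^ 2) ^ 2) / (u * (1 + 8 * π / 9 * Λ * u ^ 2)) / u ^ 2 := by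
        field_simp
    _ ≤ groundEnergyIntegrand Λ u := by
        unfold groundEnergyIntegrand
        gcongr
        · exact (arctan_sub_div_one_add_sq_pos hu).le
        · exact add_mul_sub_arctan_pos (by positivity) hu

lemma groundEnergyIntegrand_le_of_le (hΛ : 0 ≤ Λ) (hu : 0 < u) (huδ : u ≤ δ) :
    groundEnergyIntegrand Λ u ≤ 2 / 3 * (1 + δ ^ 2) * (1 + 8 * π / 9 * Λ * u ^ 2)⁻¹ := by
  have hg : u ^ 3 / (3 * (1 + δ ^ 2)) ≤ u - arctan u :=
    le_trans (by gcongr) (le_sub_arctan hu.le)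
  have hden : u * (1 + 8 * π / 9 * Λ * u ^ 2) / (1 + δ ^ 2) ≤
      u + 8 * π / 3 * Λ * (u - arctan u) := by
    rw [div_le_iff₀ (by positivity)]
    have := mul_le_mul_of_nonneg_left hg (by positivity : 0 ≤ 8 * π / 3 * Λ)
    rw [mul_div_assoc', div_le_iff₀ (by positivity)] at this
    nlinarith [sq_nonneg δ]
  calc groundEnergyIntegrand Λ u
      ≤ 2 * u ^ 3 / 3 / (u * (1 + 8 * π / 9 * Λ * u ^ 2) / (1 + δ ^ 2)) / u ^ 2 := by
        unfold groundEnergyIntegrand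
        gcongr
        exact arctan_sub_div_one_add_sq_le hu.le
    _ = 2 / 3 * (1 + δ ^ 2) * (1 + 8 * π / 9 * Λ * u ^ 2)⁻¹ := by
        field_simp

lemma groundEnergyIntegrand_le_of_ge (hΛ : 0 < Λ) (hδ : 0 < δ) (hδu : δ ≤ u) :
    groundEnergyIntegrand Λ u ≤ π / 2 / (8 * π / 3 * Λ * (δ - arctan δ)) * (u ^ 2)⁻¹ := by
  have hu := hδ.trans_le hδu
  have hgδ := sub_arctan_pos hδ
  have hden : 8 * π / 3 * Λ * (δ - arctan δ) ≤ u + 8 * π / 3 * Λ * (u - arctan u) := by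
    have := mul_le_mul_of_nonneg_left (monotone_id_sub_arctan hδu)
      (by positivity : 0 ≤ 8 * π / 3 * Λ)
    linarith
  rw [groundEnergyIntegrand, ← div_eq_mul_inv]
  gcongr
  linarith [arctan_lt_pi_div_two u, (by positivity : 0 ≤ u / (1 + u ^ 2))]

lemma integrableOn_groundEnergyIntegrand_of_le {s : Set ℝ} {g : ℝ → ℝ} (hΛ : 0 ≤ Λ)
    (hs : MeasurableSet s) (hs₀ : s ⊆ Ioi 0) (hg : IntegrableOn g s)
    (hle : ∀ u ∈ s, groundEnergyIntegrand Λ u ≤ g u) :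
    IntegrableOn (groundEnergyIntegrand Λ) s := by
  refine hg.mono' (measurable_groundEnergyIntegrand Λ).aestronglyMeasurable ?_
  rw [ae_restrict_iff' hs]
  filter_upwards with u hu
  rw [norm_of_nonneg (groundEnergyIntegrand_nonneg hΛ (hs₀ hu))]
  exact hle u hu

lemma integrableOn_groundEnergyIntegrand_Ioc (hΛ : 0 ≤ Λ) :
    IntegrableOn (groundEnergyIntegrand Λ) (Ioc 0 δ) :=
  integrableOn_groundEnergyIntegrand_of_le hΛ measurableSet_Ioc Ioc_subset_Ioi_self
    (((continuous_inv_one_add_mul_sq (by positivity)).const_mul _).integrableOn_Ioc)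
    fun _ hu => groundEnergyIntegrand_le_of_le hΛ hu.1 hu.2

lemma integrableOn_groundEnergyIntegrand_Ioi (hΛ : 0 < Λ) (hδ : 0 < δ) :
    IntegrableOn (groundEnergyIntegrand Λ) (Ioi δ) :=
  integrableOn_groundEnergyIntegrand_of_le hΛ.le measurableSet_Ioi (Ioi_subset_Ioi hδ.le)
    ((integrableOn_Ioi_inv_sq hδ).const_mul _)
    fun _ hu => groundEnergyIntegrand_le_of_ge hΛ hδ (le_of_lt hu)

lemma le_integral_groundEnergyIntegrand (hΛ : 0 < Λ) (hδ : 0 < δ) :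
    2 / 3 / (1 + δ ^ 2) ^ 2 * (arctan (√(8 * π / 9 * Λ) * δ) / √(8 * π / 9 * Λ)) ≤
      ∫ u in Ioi 0, groundEnergyIntegrand Λ u := by
  have hint := (integrableOn_groundEnergyIntegrand_Ioc hΛ.le (δ := δ)).union
    (integrableOn_groundEnergyIntegrand_Ioi hΛ hδ)
  rw [Ioc_union_Ioi_eq_Ioi hδ.le] at hint
  calc 2 / 3 / (1 + δ ^ 2) ^ 2 * (arctan (√(8 * π / 9 * Λ) * δ) / √(8 * π / 9 * Λ))
      = ∫ u in Ioc 0 δ, 2 / 3 / (1 + δ ^ 2) ^ 2 * (1 + 8 * π / 9 * Λ * u ^ 2)⁻¹ := by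
        rw [integral_const_mul, integral_Ioc_inv_one_add_mul_sq (by positivity) hδ.le]
    _ ≤ ∫ u in Ioc 0 δ, groundEnergyIntegrand Λ u :=
        setIntegral_mono_on
          ((continuous_inv_one_add_mul_sq (by positivity)).const_mul _).integrableOn_Ioc
          (integrableOn_groundEnergyIntegrand_Ioc hΛ.le) measurableSet_Ioc
          fun _ hu => le_groundEnergyIntegrand_of_le hΛ.le hu.1 hu.2
    _ ≤ ∫ u in Ioi 0, groundEnergyIntegrand Λ u :=
        setIntegral_mono_set hint
          ((ae_restrict_iff' measurableSet_Ioi).2 (ae_of_all _ fun _ hu =>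
            groundEnergyIntegrand_nonneg hΛ.le hu))
          (ae_of_all _ Ioc_subset_Ioi_self)

lemma integral_groundEnergyIntegrand_le (hΛ : 0 < Λ) (hδ : 0 < δ) :
    ∫ u in Ioi 0, groundEnergyIntegrand Λ u ≤
      2 / 3 * (1 + δ ^ 2) * (arctan (√(8 * π / 9 * Λ) * δ) / √(8 * π / 9 * Λ)) +
        π / 2 / (8 * π / 3 * Λ * (δ - arctan δ)) * δ⁻¹ := by
  have h₁ := integrableOn_groundEnergyIntegrand_Ioc hΛ.le (δ := δ)
  have h₂ := integrableOn_groundEnergyIntegrand_Ioi hΛ hδ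
  calc ∫ u in Ioi 0, groundEnergyIntegrand Λ u
      = (∫ u in Ioc 0 δ, groundEnergyIntegrand Λ u) +
          ∫ u in Ioi δ, groundEnergyIntegrand Λ u := by
        rw [← Ioc_union_Ioi_eq_Ioi hδ.le,
          setIntegral_union Ioc_disjoint_Ioi_same measurableSet_Ioi h₁ h₂]
    _ ≤ (∫ u in Ioc 0 δ, 2 / 3 * (1 + δ ^ 2) * (1 + 8 * π / 9 * Λ * u ^ 2)⁻¹) +
          ∫ u in Ioi δ, π / 2 / (8 * π / 3 * Λ * (δ - arctan δ)) * (u ^ 2)⁻¹ :=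
        add_le_add
          (setIntegral_mono_on h₁
            ((continuous_inv_one_add_mul_sq (by positivity)).const_mul _).integrableOn_Ioc
            measurableSet_Ioc fun _ hu => groundEnergyIntegrand_le_of_le hΛ.le hu.1 hu.2)
          (setIntegral_mono_on h₂ ((integrableOn_Ioi_inv_sq hδ).const_mul _)
            measurableSet_Ioi fun _ hu => groundEnergyIntegrand_le_of_ge hΛ hδ hu.le)
    _ = _ := by
        rw [integral_const_mul, integral_const_mul,
          integral_Ioc_inv_one_add_mul_sq (by positivity) hδ.le, integral_Ioi_inv_sq hδ]

end Integrand

lemma groundEnergy_div_rpow_eq {Λ : ℝ} (hΛ : 0 < Λ) :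
    groundEnergy Λ / Λ ^ ((3 : ℝ) / 2) = 4 * √Λ * ∫ u in Ioi 0, groundEnergyIntegrand Λ u := by
  have hpow : Λ ^ 2 / Λ ^ ((3 : ℝ) / 2) = √Λ := by
    rw [sqrt_eq_rpow, ← rpow_natCast, ← rpow_sub hΛ]
    norm_num
  rw [groundEnergy, ← hpow]
  simp only [groundEnergyIntegrand]
  ring

-- `4 √Λ ∫₀^δ (2/3) (1 + (8π/9) Λ u²)⁻¹ du`, the contribution of momenta below `δ`.
noncomputable def groundEnergyLeadingTerm (δ Λ : ℝ) : ℝ :=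
  4 * (2 / 3) * (√Λ * (arctan (√(8 * π / 9 * Λ) * δ) / √(8 * π / 9 * Λ)))

lemma tendsto_groundEnergyLeadingTerm {δ : ℝ} (hδ : 0 < δ) :
    Tendsto (groundEnergyLeadingTerm δ) atTop (𝓝 √(2 * π)) := by
  have hc : 0 < 8 * π / 9 := by positivity
  have hK : 4 * (2 / 3) * (π / 2 / √(8 * π / 9)) = √(2 * π) := by
    have h2π : 0 < √(2 * π) := by positivity
    rw [show 8 * π / 9 = (2 / 3) ^ 2 * (2 * π) by ring, sqrt_mul (by positivity),
      sqrt_sq (by positivity)]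
    field_simp
    rw [sq_sqrt (by positivity)]
    ring
  rw [← hK]
  exact (tendsto_sqrt_mul_arctan_div_sqrt hc hδ).const_mul _

-- `4 √Λ ∫_δ^∞ (π/2) / ((8π/3) Λ (δ - arctan δ)) u⁻² du`, the bound on momenta above `δ`.
noncomputable def groundEnergyTailTerm (δ Λ : ℝ) : ℝ :=
  4 * √Λ * (π / 2 / (8 * π / 3 * Λ * (δ - arctan δ)) * δ⁻¹)

lemma tendsto_groundEnergyTailTerm (δ : ℝ) : Tendsto (groundEnergyTailTerm δ) atTop (𝓝 0) := by
  have hsqrt : Tendsto (fun Λ : ℝ => √Λ / Λ) atTop (𝓝 0) :=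
    (tendsto_inv_atTop_zero.comp tendsto_sqrt_atTop).congr fun _ => sqrt_div_self.symm
  simpa using (hsqrt.const_mul (4 * (π / 2 / (8 * π / 3 * (δ - arctan δ)) * δ⁻¹))).congr
    fun Λ => by rw [groundEnergyTailTerm]; generalize δ - arctan δ = g; ring

lemma groundEnergy_div_rpow_mem_Icc {Λ δ : ℝ} (hΛ : 0 < Λ) (hδ : 0 < δ) :
    groundEnergy Λ / Λ ^ ((3 : ℝ) / 2) ∈ Icc (groundEnergyLeadingTerm δ Λ / (1 + δ ^ 2) ^ 2)
      ((1 + δ ^ 2) * groundEnergyLeadingTerm δ Λ + groundEnergyTailTerm δ Λ) := by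
  rw [groundEnergy_div_rpow_eq hΛ]
  have h4 : 0 ≤ 4 * √Λ := by positivity
  constructor
  · calc groundEnergyLeadingTerm δ Λ / (1 + δ ^ 2) ^ 2
        = 4 * √Λ * (2 / 3 / (1 + δ ^ 2) ^ 2 *
            (arctan (√(8 * π / 9 * Λ) * δ) / √(8 * π / 9 * Λ))) := by
          rw [groundEnergyLeadingTerm]; ring
      _ ≤ _ := mul_le_mul_of_nonneg_left (le_integral_groundEnergyIntegrand hΛ hδ) h4
  · calc 4 * √Λ * ∫ u in Ioi 0, groundEnergyIntegrand Λ u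
        ≤ 4 * √Λ * (2 / 3 * (1 + δ ^ 2) * (arctan (√(8 * π / 9 * Λ) * δ) / √(8 * π / 9 * Λ)) +
            π / 2 / (8 * π / 3 * Λ * (δ - arctan δ)) * δ⁻¹) :=
          mul_le_mul_of_nonneg_left (integral_groundEnergyIntegrand_le hΛ hδ) h4
      _ = _ := by rw [groundEnergyLeadingTerm, groundEnergyTailTerm]; ring

lemma tendsto_groundEnergy_div_rpow :
    Tendsto (fun Λ => groundEnergy Λ / Λ ^ ((3 : ℝ) / 2)) atTop (𝓝 √(2 * π)) := by
  have hℓ : ContinuousAt (fun δ : ℝ => √(2 * π) / (1 + δ ^ 2) ^ 2) 0 := by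
    fun_prop (disch := positivity)
  have hυ : ContinuousAt (fun δ : ℝ => (1 + δ ^ 2) * √(2 * π)) 0 := by fun_prop
  refine tendsto_of_squeeze_family (p := 𝓝[>] (0 : ℝ))
    (lo := fun δ Λ => groundEnergyLeadingTerm δ Λ / (1 + δ ^ 2) ^ 2)
    (hi := fun δ Λ => (1 + δ ^ 2) * groundEnergyLeadingTerm δ Λ + groundEnergyTailTerm δ Λ)
    (by convert hℓ.tendsto.mono_left nhdsWithin_le_nhds using 2; norm_num)
    (by convert hυ.tendsto.mono_left nhdsWithin_le_nhds using 2; norm_num) ?_ ?_ ?_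
  · filter_upwards [self_mem_nhdsWithin] with δ hδ
    exact (tendsto_groundEnergyLeadingTerm hδ).div_const _
  · filter_upwards [self_mem_nhdsWithin] with δ hδ
    simpa using ((tendsto_groundEnergyLeadingTerm hδ).const_mul _).add
      (tendsto_groundEnergyTailTerm δ)
  · filter_upwards [self_mem_nhdsWithin] with δ hδ
    filter_upwards [eventually_gt_atTop 0] with Λ hΛ
    exact groundEnergy_div_rpow_mem_Icc hΛ hδ

theorem groundEnergy_ultraviolet_asymptotics :
    Real.sqrt (2 * π) / Real.sqrt 3 ≤
      liminf (fun Λ : ℝ => groundEnergy Λ / Λ ^ ((3 : ℝ) / 2)) atTop ∧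
    limsup (fun Λ : ℝ => groundEnergy Λ / Λ ^ ((3 : ℝ) / 2)) atTop ≤
      Real.sqrt (2 * π) := by
  rw [tendsto_groundEnergy_div_rpow.liminf_eq, tendsto_groundEnergy_div_rpow.limsup_eq]
  exact ⟨div_le_self (sqrt_nonneg _) (one_le_sqrt.2 (by norm_num)), le_rfl⟩
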